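/- Let 1 < p ≤ θ and define K(p, θ) := (3p² − 1)θ³ + (2p² − p)θ² − 2(p² + p)θ + p. Then −((θ+1)⁴/(16θ(p+1)²)) · L(2θ(p+1)/(θ+1)) = K(p, θ), and K(p, θ) > 0; consequently L(2θ(p+1)/(θ+1)) < 0. -/
import Mathlib


noncomputable section

/-- The quartic polynomial `L`. -/
def Lpoly (p θ s : ℝ) : ℝ :=
  s ^ 4 - (16 * p * θ * (p + 1) / (θ + 1)) * s ^ 2
    + (16 * p * θ * (p + 1) * (p + θ + 2) / (θ + 1) ^ 2) * s
    - 16 * p * θ * (p + 1) ^ 2 / (θ + 1) ^ 2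

/-- identity and positivity of `K(p,θ)`, hence `L(2θ(p+1)/(θ+1)) < 0`. -/
theorem stmt12 (p θ : ℝ) (hp : 1 < p) (hpθ : p ≤ θ) :
    -((θ + 1) ^ 4 / (16 * θ * (p + 1) ^ 2)) * Lpoly p θ (2 * θ * (p + 1) / (θ + 1)) =
      (3 * p ^ 2 - 1) * θ ^ 3 + (2 * p ^ 2 - p) * θ ^ 2 - 2 * (p ^ 2 + p) * θ + p ∧
    0 < (3 * p ^ 2 - 1) * θ ^ 3 + (2 * p ^ 2 - p) * θ ^ 2 - 2 * (p ^ 2 + p) * θ + p ∧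
    Lpoly p θ (2 * θ * (p + 1) / (θ + 1)) < 0 := by
  have hθ : 1 < θ := lt_of_lt_of_le hp hpθ
  have hθ0 : (0:ℝ) < θ := by linarith
  have hθ1 : (0:ℝ) < θ + 1 := by linarith
  have hp1 : (0:ℝ) < p + 1 := by linarith
  have hid : -((θ + 1) ^ 4 / (16 * θ * (p + 1) ^ 2)) * Lpoly p θ (2 * θ * (p + 1) / (θ + 1)) =
      (3 * p ^ 2 - 1) * θ ^ 3 + (2 * p ^ 2 - p) * θ ^ 2 - 2 * (p ^ 2 + p) * θ + p := by
    unfold Lpoly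
    field_simp
    ring
  have hK : 0 < (3 * p ^ 2 - 1) * θ ^ 3 + (2 * p ^ 2 - p) * θ ^ 2 - 2 * (p ^ 2 + p) * θ + p := by
    nlinarith [mul_pos (sub_pos.2 hp) (sub_pos.2 hθ), sq_nonneg (θ - p), sq_nonneg (θ - 1),
      sq_nonneg (p - 1), mul_pos (mul_pos hθ0 hθ0) hθ0, sq_nonneg (p*θ - 1),
      mul_nonneg (sq_nonneg (θ - 1)) (le_of_lt hp1), mul_nonneg (sub_nonneg.2 hpθ) (sq_nonneg θ),
      mul_nonneg (mul_nonneg (sub_nonneg.2 hpθ) hθ0.le) hθ0.le,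
      mul_pos (mul_pos (sub_pos.2 hp) hθ0) hθ0]
  refine ⟨hid, hK, ?_⟩
  have hc : 0 < (θ + 1) ^ 4 / (16 * θ * (p + 1) ^ 2) := by positivity
  nlinarith [hid, hK, hc, mul_pos hc hK]
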